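/- arXiv:2102.10702 — 2 statements merged into one kernel-verified Lean document; each statement's English description precedes it below -/
import Mathlib

section
/- Correctness of the B-derivative evaluation algorithm as an algebraic identity: fix a permutation σ of {1,…,n} and δρ ∈ ℝ^d, and define recursively δρ_1 = δρ and, for k = 1,…,n, τ_k = −⟨η_{σ(k)}, δρ_k⟩ / ⟨η_{σ(k)}, Γ(b^σ_{k−1})⟩ and δρ_{k+1} = δρ_k + τ_k Γ(b^σ_{k−1}). Then δρ_{n+1} − (Σ_{k=1}^n τ_k) · Γ(+𝟙) = M_σ · δρ. -/
open Matrix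

/-- `b^σ_k ∈ {−1,+1}^n` (encoded `Fin n → Bool`, `true ↔ +1`): the `j`-th entry is
`+1` iff `j ∈ {σ(1),…,σ(k)}`.  Thus `b^σ_0 = −𝟙` and `b^σ_n = +𝟙`. -/
def bSig {n : ℕ} (σ : Equiv.Perm (Fin n)) (k : ℕ) : Fin n → Bool :=
  fun j => decide ((σ.symm j : ℕ) < k)

/-- The saltation matrix `M_σ = A_{n−1} ⋯ A_1 A_0` where
`A_k = I_d + (Γ(b^σ_{k+1}) − Γ(b^σ_k)) η_{σ(k+1)}^⊤ / ⟨η_{σ(k+1)}, Γ(b^σ_k)⟩`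
(with the `k = 0` factor applied first, i.e. rightmost; `σ(k+1)` in 1-indexed
notation is `σ k` for `k : Fin n`). -/
noncomputable def saltation {d n : ℕ} (η : Fin n → Fin d → ℝ)
    (Γ : (Fin n → Bool) → Fin d → ℝ) (σ : Equiv.Perm (Fin n)) :
    Matrix (Fin d) (Fin d) ℝ :=
  ((List.ofFn (fun k : Fin n =>
      (1 : Matrix (Fin d) (Fin d) ℝ) +
        (η (σ k) ⬝ᵥ Γ (bSig σ (k : ℕ)))⁻¹ •
          vecMulVec (Γ (bSig σ ((k : ℕ) + 1)) - Γ (bSig σ (k : ℕ))) (η (σ k)))).reverse).prod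


lemma aux_mulVec {d : ℕ} (c : ℝ) (u w v : Fin d → ℝ) :
    ((1 : Matrix (Fin d) (Fin d) ℝ) + c • vecMulVec u w).mulVec v
      = v + (c * (w ⬝ᵥ v)) • u := by
  rw [Matrix.add_mulVec, Matrix.one_mulVec, Matrix.smul_mulVec]
  ext i
  simp only [Pi.add_apply, Pi.smul_apply, smul_eq_mul, mulVec, vecMulVec, dotProduct,
    Matrix.of_apply, Finset.mul_sum]
  rw [Finset.sum_mul]
  congr 1
  apply Finset.sum_congr rfl
  intro x _
  ring

/-- correctness of the B-derivative evaluation algorithm as an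
algebraic identity.  Reindexing the recursion of the statement to start at `0`
(`r k = δρ_{k+1}`, `τ' k = τ_{k+1}`, and `σ(k+1)` in 1-indexed notation is `σ k`):
`r 0 = δρ`, `τ' k = −⟨η_{σ k}, r k⟩ / ⟨η_{σ k}, Γ(b^σ_k)⟩`,
`r (k+1) = r k + τ' k • Γ(b^σ_k)`; then
`r n − (Σ_k τ' k) • Γ(+𝟙) = M_σ δρ`. -/
theorem stmt10 {d n : ℕ} (hd : 1 ≤ d) (hn : 1 ≤ n) (hnd : n ≤ d)
    (ρ : Fin d → ℝ) (η : Fin n → Fin d → ℝ) (hη : LinearIndependent ℝ η)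
    (Γ : (Fin n → Bool) → Fin d → ℝ)
    (hev : ∀ (j : Fin n) (b : Fin n → Bool), 0 < η j ⬝ᵥ Γ b)
    (σ : Equiv.Perm (Fin n)) (δρ : Fin d → ℝ)
    (r : ℕ → Fin d → ℝ) (τ : ℕ → ℝ)
    (hr0 : r 0 = δρ)
    (hτ : ∀ k : Fin n,
      τ (k : ℕ) = -(η (σ k) ⬝ᵥ r (k : ℕ)) / (η (σ k) ⬝ᵥ Γ (bSig σ (k : ℕ))))
    (hr : ∀ k : Fin n,
      r ((k : ℕ) + 1) = r (k : ℕ) + τ (k : ℕ) • Γ (bSig σ (k : ℕ))) :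
    r n - (∑ k : Fin n, τ (k : ℕ)) • Γ (fun _ => true) =
      (saltation η Γ σ).mulVec δρ := by
  set f : Fin n → Matrix (Fin d) (Fin d) ℝ := fun k =>
      (1 : Matrix (Fin d) (Fin d) ℝ) +
        (η (σ k) ⬝ᵥ Γ (bSig σ (k : ℕ)))⁻¹ •
          vecMulVec (Γ (bSig σ ((k : ℕ) + 1)) - Γ (bSig σ (k : ℕ))) (η (σ k)) with hf
  set L : List (Matrix (Fin d) (Fin d) ℝ) := List.ofFn f with hL
  have key : ∀ k, k ≤ n →
      ((L.take k).reverse.prod).mulVec δρ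
        = r k - (∑ j ∈ Finset.range k, τ j) • Γ (bSig σ k) := by
    intro k
    induction k with
    | zero =>
      intro _
      simp [hr0]
    | succ k ih =>
      intro hk1
      have hk : k < n := hk1
      have hlen : k < L.length := by simpa [hL] using hk
      have htake : (L.take (k + 1)).reverse.prod
          = f ⟨k, hk⟩ * (L.take k).reverse.prod := by
        rw [List.take_succ]
        have : L[k]? = some (f ⟨k, hk⟩) := by
          simp [hL, List.getElem?_eq_getElem hlen, List.getElem_ofFn, hk]
        rw [this]
        simp
      rw [htake, ← Matrix.mulVec_mulVec, ih hk.le]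
      set kf : Fin n := ⟨k, hk⟩
      set c : ℝ := η (σ kf) ⬝ᵥ Γ (bSig σ k) with hc
      have hcpos : 0 < c := hev _ _
      have hc0 : c ≠ 0 := hcpos.ne'
      have hdot : η (σ kf) ⬝ᵥ r k = -τ k * c := by
        have := hτ kf
        change τ k = -(η (σ kf) ⬝ᵥ r k) / c at this
        rw [this]
        field_simp
      have hA : f kf = (1 : Matrix (Fin d) (Fin d) ℝ) +
          c⁻¹ • vecMulVec (Γ (bSig σ (k + 1)) - Γ (bSig σ k)) (η (σ kf)) := rfl
      rw [hA, aux_mulVec]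
      have hdot2 : η (σ kf) ⬝ᵥ (r k - (∑ j ∈ Finset.range k, τ j) • Γ (bSig σ k))
          = -τ k * c - (∑ j ∈ Finset.range k, τ j) * c := by
        rw [dotProduct_sub, dotProduct_smul, hdot, smul_eq_mul, ← hc]
      rw [hdot2]
      have hcoef : c⁻¹ * (-τ k * c - (∑ j ∈ Finset.range k, τ j) * c)
          = -τ k - ∑ j ∈ Finset.range k, τ j := by
        field_simp
      rw [hcoef]
      have hrk := hr kf
      change r (k + 1) = r k + τ k • Γ (bSig σ k) at hrk
      rw [hrk, Finset.sum_range_succ]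
      module
  have hfinal := key n le_rfl
  have hLtake : L.take n = L := by simp [hL]
  have hbn : bSig σ n = fun _ => true := by
    funext j
    simp [bSig, Fin.is_lt]
  rw [hLtake] at hfinal
  have hsum : (∑ k : Fin n, τ (k : ℕ)) = ∑ j ∈ Finset.range n, τ j :=
    (Finset.sum_range fun j => τ j).symm
  rw [saltation, ← hL, hfinal, hbn, hsum]
end

section
/- The cones of the conical subdivision cover the whole space: assume n ≥ 2; then ⋃_σ Σ'_σ = ℝ^d, where the union is over all permutations σ of {1,…,n}; that is, for every v ∈ ℝ^d there exist a permutation σ of {1,…,n}, a scalar μ ≥ 0, nonnegative coefficients α_0,…,α_n summing to 1, and ξ ∈ K such that v = μ(Σ_{k=0}^n α_k ζ_{b^σ_k} + ξ − ρ^-). -/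
open Matrix

lemma memTake_iff_lt {α : Type*} {L : List α} (hnd : L.Nodup) {k i : ℕ}
    (hi : i < L.length) : L[i] ∈ L.take k ↔ i < k := by
  constructor
  · intro h
    rcases List.mem_take_iff_getElem.mp h with ⟨i', hm, he⟩
    have h1 : i' = i := hnd.getElem_inj_iff.mp he
    have h2 := lt_inf_iff.mp hm
    omega
  · intro h
    exact List.mem_take_iff_getElem.mpr ⟨i, lt_inf_iff.mpr ⟨h, hi⟩, rfl⟩

lemma perm_of_list {n : ℕ} (L : List (Fin n)) (hnd : L.Nodup)
    (htf : L.toFinset = Finset.univ) :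
    ∃ σ : Equiv.Perm (Fin n), ∀ (k : ℕ) (i : Fin n),
      i ∈ L.take k ↔ (σ.symm i : ℕ) < k := by
  have hlen : L.length = n := by
    have h := List.toFinset_card_of_nodup hnd
    rw [htf] at h
    simpa using h.symm
  let f : Fin n → Fin n := fun k => L.get (Fin.cast hlen.symm k)
  have hinj : Function.Injective f := by
    intro a b hab
    have h2 := List.nodup_iff_injective_get.mp hnd hab
    have h3 := congrArg Fin.val h2
    simp only [Fin.coe_cast] at h3
    exact Fin.ext h3
  let σ : Equiv.Perm (Fin n) := Equiv.ofBijective f (Finite.injective_iff_bijective.mp hinj)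
  refine ⟨σ, fun k i => ?_⟩
  have hfi : f (σ.symm i) = i := σ.apply_symm_apply i
  have hlt : ((σ.symm i : ℕ)) < L.length := by rw [hlen]; exact (σ.symm i).isLt
  have hget : L[(σ.symm i : ℕ)]'hlt = i := hfi
  have hmem := memTake_iff_lt (k := k) hnd hlt
  rw [hget] at hmem
  exact hmem

/-- Auxiliary: the dot product distributes over finite sums. -/
lemma dot_sum {d : ℕ} {ι : Type*} (s : Finset ι) (η : Fin d → ℝ) (f : ι → Fin d → ℝ) :
    η ⬝ᵥ (∑ k ∈ s, f k) = ∑ k ∈ s, η ⬝ᵥ f k := by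
  classical
  induction s using Finset.cons_induction with
  | empty => simp [dotProduct]
  | cons a s ha ih => rw [Finset.sum_cons, Finset.sum_cons, dotProduct_add, ih]

/-- Core combinatorial covering lemma: any componentwise-nonpositive vector supported on
`s` is a nonnegative combination of the vectors `q (b_k)` along some activation order of
`s`, where `b_k` is `true` outside `s` and on the first `k` activated coordinates. -/
lemma coreA {n : ℕ} (q : (Fin n → Bool) → Fin n → ℝ)
    (hq0 : ∀ b j, b j = true → q b j = 0)
    (hqneg : ∀ b j, b j = false → q b j < 0) (s : Finset (Fin n)) :
    ∀ u : Fin n → ℝ, (∀ j, u j ≤ 0) → (∀ j, j ∉ s → u j = 0) →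
    ∃ (L : List (Fin n)) (lam : ℕ → ℝ), L.Nodup ∧ L.toFinset = s ∧ (∀ k, 0 ≤ lam k) ∧
      ∀ j, u j = ∑ k ∈ Finset.range s.card,
        lam k * q (fun i => decide (i ∉ s ∨ i ∈ L.take k)) j := by
  classical
  induction s using Finset.strongInduction with
  | _ s ih =>
    intro u hu hu0
    rcases s.eq_empty_or_nonempty with rfl | hne
    · refine ⟨[], fun _ => 0, by simp, by simp, fun k => le_refl 0, fun j => ?_⟩
      rw [Finset.card_empty]
      simpa using hu0 j (by simp)
    · set b₀ : Fin n → Bool := fun i => decide (i ∉ s) with hb₀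
      have hqs : ∀ j ∈ s, q b₀ j < 0 := fun j hj => hqneg _ _ (by simp [hb₀, hj])
      have hq0s : ∀ j, j ∉ s → q b₀ j = 0 := fun j hj => hq0 _ _ (by simp [hb₀, hj])
      obtain ⟨m, hm, hmin⟩ := Finset.exists_mem_eq_inf' hne (fun j => u j / q b₀ j)
      set lam0 := s.inf' hne (fun j => u j / q b₀ j) with hlam0
      have hlam0nn : 0 ≤ lam0 := by
        rw [hmin]
        exact div_nonneg_iff.mpr (Or.inr ⟨hu m, (hqs m hm).le⟩)
      set u' : Fin n → ℝ := fun j => u j - lam0 * q b₀ j with hu'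
      have hu'le : ∀ j, u' j ≤ 0 := by
        intro j
        by_cases hj : j ∈ s
        · have h1 : lam0 ≤ u j / q b₀ j := Finset.inf'_le _ hj
          have h2 : q b₀ j < 0 := hqs j hj
          have h3 := (le_div_iff_of_neg h2).mp h1
          simp only [hu']
          linarith
        · simp [hu', hq0s j hj, hu0 j hj]
      have hu'm : u' m = 0 := by
        have h2 := (hqs m hm).ne
        show u m - lam0 * q b₀ m = 0
        rw [hmin]
        field_simp
        ring
      have hu'0 : ∀ j, j ∉ s.erase m → u' j = 0 := by
        intro j hj
        by_cases hjm : j = m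
        · subst hjm; exact hu'm
        · have hjs : j ∉ s := by
            intro hjs
            exact hj (Finset.mem_erase.mpr ⟨hjm, hjs⟩)
          simp [hu', hq0s j hjs, hu0 j hjs]
      obtain ⟨L', lam', hnd', htf', hlam'nn, hrep'⟩ :=
        ih (s.erase m) (Finset.erase_ssubset hm) u' hu'le hu'0
      have hmL' : m ∉ L' := by
        rw [← List.mem_toFinset, htf']
        simp
      refine ⟨m :: L', fun k => if k = 0 then lam0 else lam' (k - 1),
        List.nodup_cons.mpr ⟨hmL', hnd'⟩, ?_, ?_, ?_⟩
      · simp [List.toFinset_cons, htf', Finset.insert_erase hm]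
      · intro k
        by_cases h : k = 0 <;> simp [h, hlam0nn, hlam'nn]
      · intro j
        have hcard : s.card = (s.erase m).card + 1 := by
          rw [Finset.card_erase_of_mem hm]
          have := Finset.card_pos.mpr hne
          omega
        rw [hcard, Finset.sum_range_succ']
        have hpat : ∀ k : ℕ,
            (fun i => decide (i ∉ s ∨ i ∈ List.take (k + 1) (m :: L')))
              = (fun i => decide (i ∉ s.erase m ∨ i ∈ List.take k L')) := by
          intro k
          funext i
          simp only [List.take_succ_cons, List.mem_cons, Finset.mem_erase, decide_eq_decide]
          by_cases him : i = m
          · simp [him, hm]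
          · simp [him]
        have hsum : ∑ k ∈ Finset.range (s.erase m).card,
            (if k + 1 = 0 then lam0 else lam' (k + 1 - 1)) *
              q (fun i => decide (i ∉ s ∨ i ∈ List.take (k + 1) (m :: L'))) j = u' j := by
          rw [hrep' j]
          refine Finset.sum_congr rfl (fun k _ => ?_)
          rw [hpat k]
          norm_num
        rw [hsum]
        have he0 : (fun i => decide (i ∉ s ∨ i ∈ List.take 0 (m :: L'))) = b₀ := by
          funext i
          simp [hb₀]
        rw [he0]
        simp only [hu']
        split_ifs with h0
        · ring
        · exact absurd trivial h0

/-- the cones of the conical subdivision cover the whole space: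
with `ρ⁻ = ρ − (1/2)Γ(−𝟙)`, for every `v ∈ ℝ^d` there exist a permutation `σ`,
a scalar `μ ≥ 0`, nonnegative barycentric coefficients `α_0,…,α_n` summing to `1`,
and `ξ ∈ K` (the common kernel of the normals) such that
`v = μ(Σ_k α_k ζ_{b^σ_k} + ξ − ρ⁻)`. -/
theorem stmt14 {d n : ℕ} (hd : 2 ≤ d) (hn : 2 ≤ n) (hnd : n ≤ d)
    (ρ : Fin d → ℝ) (η : Fin n → Fin d → ℝ) (hη : LinearIndependent ℝ η)
    (Γ : (Fin n → Bool) → Fin d → ℝ)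
    (hev : ∀ (j : Fin n) (b : Fin n → Bool), 0 < η j ⬝ᵥ Γ b)
    (ζ : (Fin n → Bool) → Fin d → ℝ)
    (hζspan : ∀ b, ζ b - ρ ∈ Submodule.span ℝ (Set.range η))
    (hζp : ∀ b (j : Fin n), b j = true → η j ⬝ᵥ (ζ b - ρ) = 0)
    (hζm : ∀ b (j : Fin n), b j = false → η j ⬝ᵥ (ζ b + Γ b - ρ) = 0)
    (ρm : Fin d → ℝ) (hρm : ρm = ρ - (1/2 : ℝ) • Γ (fun _ => false)) :
    ∀ v : Fin d → ℝ,
      ∃ (σ : Equiv.Perm (Fin n)) (μ : ℝ) (α : Fin (n + 1) → ℝ) (ξ : Fin d → ℝ),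
        0 ≤ μ ∧ (∀ k, 0 ≤ α k) ∧ (∑ k, α k) = 1 ∧ (∀ j : Fin n, η j ⬝ᵥ ξ = 0) ∧
        v = μ • ((∑ k : Fin (n + 1), α k • ζ (bSig σ (k : ℕ))) + ξ - ρm) := by
  intro v
  have hn1 : 0 < n := by omega
  haveI : Nonempty (Fin n) := ⟨⟨0, hn1⟩⟩
  set r : Fin n → ℝ := fun j => (1/2) * (η j ⬝ᵥ Γ (fun _ => false)) with hrdef
  have hr : ∀ j, 0 < r j := by
    intro j
    have := hev j (fun _ => false)
    simp only [hrdef]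
    linarith
  set q : (Fin n → Bool) → Fin n → ℝ := fun b j => η j ⬝ᵥ (ζ b - ρ) with hqdef
  have hq0 : ∀ b (j : Fin n), b j = true → q b j = 0 := fun b j h => hζp b j h
  have hqe : ∀ b (j : Fin n), b j = false → q b j = -(η j ⬝ᵥ Γ b) := by
    intro b j h
    have h2 := hζm b j h
    have h3 : ζ b + Γ b - ρ = (ζ b - ρ) + Γ b := by
      funext i
      simp
      ring
    rw [h3, dotProduct_add] at h2
    simp only [hqdef]
    linarith
  have hqneg : ∀ b (j : Fin n), b j = false → q b j < 0 := by
    intro b j h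
    rw [hqe b j h]
    have := hev j b
    linarith
  have hqfalse : ∀ j, q (fun _ => false) j = -(2 * r j) := by
    intro j
    rw [hqe _ j rfl, hrdef]
    ring
  set w : Fin n → ℝ := fun j => η j ⬝ᵥ v with hwdef
  set t : ℝ := Finset.univ.sup' Finset.univ_nonempty (fun j => w j / r j) with htdef
  set u : Fin n → ℝ := fun j => w j - t * r j with hudef
  have hule : ∀ j, u j ≤ 0 := by
    intro j
    have h1 : w j / r j ≤ t := by
      rw [htdef]
      exact Finset.le_sup' (fun j => w j / r j) (Finset.mem_univ j)
    have h2 := hr j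
    have h3 := (div_le_iff₀ h2).mp h1
    simp only [hudef]
    linarith
  obtain ⟨L, lam, hnd', htf, hlamnn, hrep⟩ :=
    coreA q hq0 hqneg Finset.univ u hule (fun j hj => absurd (Finset.mem_univ j) hj)
  obtain ⟨σ, hσ⟩ := perm_of_list L hnd' htf
  have hrep2 : ∀ j, u j = ∑ k ∈ Finset.range n, lam k * q (bSig σ k) j := by
    intro j
    rw [hrep j]
    rw [show (Finset.univ : Finset (Fin n)).card = n by simp]
    refine Finset.sum_congr rfl (fun k _ => ?_)
    have hfun : (fun i => decide (i ∉ (Finset.univ : Finset (Fin n)) ∨ i ∈ L.take k)) = bSig σ k := by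
      funext i
      simp only [bSig, decide_eq_decide, Finset.mem_univ, not_true_eq_false, false_or]
      exact hσ k i
    rw [hfun]
  set S : ℝ := ∑ k ∈ Finset.range n, lam k with hSdef
  set c : ℕ → ℝ := fun k => (if k < n then lam k else 0) +
      (if k = 0 then 1 + max (S - t) 0 else 0) +
      (if k = n then 1 + max (t - S) 0 else 0) with hcdef
  have hmax1 : (0:ℝ) ≤ max (S - t) 0 := le_max_right _ _
  have hmax2 : (0:ℝ) ≤ max (t - S) 0 := le_max_right _ _
  have hcnn : ∀ k, 0 ≤ c k := by
    intro k
    simp only [hcdef]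
    split_ifs <;> linarith [hlamnn k]
  set μ : ℝ := ∑ k ∈ Finset.range (n+1), c k with hμdef
  have hμpos : 0 < μ := by
    have h0 : 0 < c 0 := by
      simp only [hcdef]
      split_ifs <;> linarith [hlamnn 0]
    exact Finset.sum_pos' (fun k _ => hcnn k) ⟨0, Finset.mem_range.mpr (by omega), h0⟩
  have hb0 : bSig σ 0 = (fun _ => false) := by
    funext i
    simp [bSig]
  have hbn : bSig σ n = (fun _ => true) := by
    funext i
    simp only [bSig, decide_eq_true_eq]
    exact (σ.symm i).isLt
  have hkey : ∀ j, ∑ k ∈ Finset.range (n+1), c k * (q (bSig σ k) j + r j) = w j := by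
    intro j
    have hsplit : ∀ k ∈ Finset.range (n+1), c k * (q (bSig σ k) j + r j)
        = (if k < n then lam k else 0) * (q (bSig σ k) j + r j)
          + ((if k = 0 then (1 + max (S - t) 0) * (q (bSig σ k) j + r j) else 0)
          + (if k = n then (1 + max (t - S) 0) * (q (bSig σ k) j + r j) else 0)) := by
      intro k _
      simp only [hcdef]
      split_ifs <;> ring
    rw [Finset.sum_congr rfl hsplit, Finset.sum_add_distrib, Finset.sum_add_distrib]
    have h1 : ∑ k ∈ Finset.range (n+1), (if k < n then lam k else 0) * (q (bSig σ k) j + r j)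
        = u j + S * r j := by
      rw [Finset.sum_range_succ, if_neg (lt_irrefl n)]
      have h1a : ∑ k ∈ Finset.range n, (if k < n then lam k else 0) * (q (bSig σ k) j + r j)
          = ∑ k ∈ Finset.range n, (lam k * q (bSig σ k) j + lam k * r j) := by
        refine Finset.sum_congr rfl (fun k hk => ?_)
        rw [if_pos (Finset.mem_range.mp hk)]
        ring
      rw [h1a, Finset.sum_add_distrib, ← hrep2 j, ← Finset.sum_mul, ← hSdef]
      ring
    have h2 : ∑ k ∈ Finset.range (n+1),
        (if k = 0 then (1 + max (S - t) 0) * (q (bSig σ k) j + r j) else 0)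
        = (1 + max (S - t) 0) * (-(r j)) := by
      rw [Finset.sum_ite_eq' (Finset.range (n+1)) 0
        (fun k => (1 + max (S - t) 0) * (q (bSig σ k) j + r j)),
        if_pos (Finset.mem_range.mpr (by omega)), hb0, hqfalse j]
      ring
    have h3 : ∑ k ∈ Finset.range (n+1),
        (if k = n then (1 + max (t - S) 0) * (q (bSig σ k) j + r j) else 0)
        = (1 + max (t - S) 0) * (r j) := by
      rw [Finset.sum_ite_eq' (Finset.range (n+1)) n
        (fun k => (1 + max (t - S) 0) * (q (bSig σ k) j + r j)),
        if_pos (Finset.mem_range.mpr (by omega)), hbn, hq0 _ j rfl]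
      ring
    rw [h1, h2, h3]
    have hmax : max (t - S) 0 - max (S - t) 0 = t - S := by
      rcases le_total t S with h | h
      · rw [max_eq_right (by linarith), max_eq_left (by linarith)]
        ring
      · rw [max_eq_left (by linarith), max_eq_right (by linarith)]
        ring
    simp only [hudef]
    linear_combination (r j) * hmax
  have hρmdot : ∀ j, η j ⬝ᵥ ρm = η j ⬝ᵥ ρ - r j := by
    intro j
    rw [hρm, dotProduct_sub, dotProduct_smul]
    simp only [hrdef, smul_eq_mul]
  set α : Fin (n+1) → ℝ := fun k => c (k : ℕ) / μ with hαdef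
  have hsum1 : ∀ j, ∑ k ∈ Finset.range (n+1), c k * (η j ⬝ᵥ ζ (bSig σ k))
      = w j + μ * (η j ⬝ᵥ ρm) := by
    intro j
    have hthis := hkey j
    have expand : ∀ k ∈ Finset.range (n+1), c k * (q (bSig σ k) j + r j)
        = c k * (η j ⬝ᵥ ζ (bSig σ k)) + c k * (r j - η j ⬝ᵥ ρ) := by
      intro k _
      have : q (bSig σ k) j = η j ⬝ᵥ ζ (bSig σ k) - η j ⬝ᵥ ρ := by
        simp only [hqdef]
        rw [dotProduct_sub]
      rw [this]
      ring
    rw [Finset.sum_congr rfl expand, Finset.sum_add_distrib, ← Finset.sum_mul, ← hμdef] at hthis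
    rw [hρmdot j]
    linarith [hthis]
  have hA : ∀ j, η j ⬝ᵥ (∑ k : Fin (n+1), α k • ζ (bSig σ (k : ℕ)))
      = μ⁻¹ * w j + η j ⬝ᵥ ρm := by
    intro j
    rw [dot_sum]
    have e1 : ∀ k : Fin (n+1), η j ⬝ᵥ (α k • ζ (bSig σ (k : ℕ)))
        = (c (k : ℕ) / μ) * (η j ⬝ᵥ ζ (bSig σ (k : ℕ))) := by
      intro k
      rw [dotProduct_smul]
      simp [hαdef, smul_eq_mul]
    rw [Finset.sum_congr rfl (fun k _ => e1 k),
      Fin.sum_univ_eq_sum_range (fun k => (c k / μ) * (η j ⬝ᵥ ζ (bSig σ k))) (n+1)]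
    have h4 : ∑ k ∈ Finset.range (n+1), (c k / μ) * (η j ⬝ᵥ ζ (bSig σ k))
        = (∑ k ∈ Finset.range (n+1), c k * (η j ⬝ᵥ ζ (bSig σ k))) / μ := by
      rw [Finset.sum_div]
      exact Finset.sum_congr rfl (fun k _ => by ring)
    rw [h4, hsum1 j]
    field_simp
  refine ⟨σ, μ, α,
    (μ⁻¹ • v) - ((∑ k : Fin (n+1), α k • ζ (bSig σ (k : ℕ))) - ρm),
    hμpos.le, fun k => div_nonneg (hcnn k) hμpos.le, ?_, ?_, ?_⟩
  · simp only [hαdef]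
    rw [Fin.sum_univ_eq_sum_range (fun k => c k / μ) (n+1), ← Finset.sum_div, ← hμdef,
      div_self hμpos.ne']
  · intro j
    rw [dotProduct_sub, dotProduct_sub, hA j, dotProduct_smul]
    simp only [hwdef, smul_eq_mul]
    ring
  · have hxi : (∑ k : Fin (n+1), α k • ζ (bSig σ (k : ℕ)))
        + ((μ⁻¹ • v) - ((∑ k : Fin (n+1), α k • ζ (bSig σ (k : ℕ))) - ρm)) - ρm
        = μ⁻¹ • v := by
      abel
    rw [hxi, smul_smul, mul_inv_cancel₀ hμpos.ne', one_smul]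
end
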